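/- arXiv:1604.00526 — 2 statements merged into one kernel-verified Lean document; each statement's English description precedes it below -/
import Mathlib

section
/- For every k ∈ ℕ the weighted-increment terms satisfy the recursion κ_{k+1} ≤ κ_k − ⟨∇_{j_k} f(x^k) − ∇_{j_k} f(x^{k−d_k}), x^{k+1}_{j_k} − x^k_{j_k}⟩ + M√(ρ_τ τ)‖x^{k+1}_{j_k} − x^k_{j_k}‖². -/
open Finset Filter RealInnerProductSpace

/-- squared ℓ²-norm on the product `H = H₁ × ⋯ × H_m`: `‖x‖² = Σ_j ‖x_j‖²`. -/
noncomputable def sqNorm {m : ℕ} {H : Fin m → Type*} [∀ j, NormedAddCommGroup (H j)]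
    (x : ∀ j, H j) : ℝ := ∑ j, ‖x j‖ ^ 2

/-- the partial gradient map: `y ↦ ∇_j f(x_1, …, x_{j-1}, y, x_{j+1}, …, x_m)`. -/
noncomputable def pgrad {m : ℕ} {H : Fin m → Type*} [∀ j, NormedAddCommGroup (H j)]
    [∀ j, InnerProductSpace ℝ (H j)] [∀ j, FiniteDimensional ℝ (H j)]
    (f : (∀ j, H j) → ℝ) (x : ∀ j, H j) (j : Fin m) (y : H j) : H j :=
  gradient (fun z => f (Function.update x j z)) y

/-!
The weight of the increment `x^{h+1} - x^h` in `κ` grows by one with every step it ages and the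
increment leaves the window after `τ` steps, so `κ_{k+1} = κ_k + a (τ ‖x^{k+1} - x^k‖² - S_k)`,
where `a = M √ρ_τ / (2 √τ)` and `S_k` is the sum of the squared increments in the window.
Since `x^k - x^{k-d_k}` is a sum of window increments, at most `ρ_τ` of which are nonzero in each
block, Cauchy–Schwarz gives `‖x^k - x^{k-d_k}‖² ≤ ρ_τ S_k`. Hence the delayed-gradient error
satisfies `⟨g, u⟩ ≤ M √(ρ_τ S_k) ‖u‖ ≤ a (τ ‖u‖² + S_k)` by AM–GM, and the `-a S_k` cancels.
-/

lemma norm_sum_sq_le_card_mul_sum_norm_sq {ι E : Type*} [SeminormedAddCommGroup E]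
    {s T : Finset ι} (v : ι → E) (hTs : T ⊆ s) (hv : ∀ i ∈ s, i ∉ T → v i = 0) :
    ‖∑ i ∈ s, v i‖ ^ 2 ≤ #T * ∑ i ∈ s, ‖v i‖ ^ 2 := by
  rw [← sum_subset hTs hv]
  calc ‖∑ i ∈ T, v i‖ ^ 2 ≤ (∑ i ∈ T, ‖v i‖) ^ 2 := by gcongr; exact norm_sum_le _ _
    _ ≤ #T * ∑ i ∈ T, ‖v i‖ ^ 2 := sq_sum_le_card_mul_sum_sq
    _ ≤ #T * ∑ i ∈ s, ‖v i‖ ^ 2 := by gcongr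

lemma real_inner_le_of_norm_le_mul_sqrt {E : Type*} [NormedAddCommGroup E]
    [InnerProductSpace ℝ E] {g u : E} {b S t : ℝ} (hb : 0 ≤ b) (hS : 0 ≤ S) (ht : 0 < t)
    (hg : ‖g‖ ≤ b * √S) :
    ⟪g, u⟫ ≤ b / (2 * √t) * (t * ‖u‖ ^ 2 + S) := by
  have hst : 0 < √t := Real.sqrt_pos.mpr ht
  have amgm : 2 * (√t * ‖u‖) * √S ≤ t * ‖u‖ ^ 2 + S := by
    nlinarith [two_mul_le_add_sq (√t * ‖u‖) √S, Real.sq_sqrt hS, Real.sq_sqrt ht.le]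
  calc ⟪g, u⟫ ≤ ‖g‖ * ‖u‖ := real_inner_le_norm g u
    _ ≤ b * √S * ‖u‖ := by gcongr
    _ = b / (2 * √t) * (2 * (√t * ‖u‖) * √S) := by field_simp
    _ ≤ b / (2 * √t) * (t * ‖u‖ ^ 2 + S) := by gcongr

lemma sum_range_weighted_window_succ {R : Type*} [CommRing R] (w : ℤ → R) (k : ℤ) (τ : ℕ) :
    ∑ i ∈ range τ, ((i : R) + 1) * w (k + 1 - τ + i) =
      ∑ i ∈ range τ, ((i : R) + 1) * w (k - τ + i) + τ * w k - ∑ i ∈ range τ, w (k - τ + i) := by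
  set q : ℕ → R := fun i => w (k - τ + i)
  have hqτ : q τ = w k := by simp only [q]; congr 1; ring
  calc ∑ i ∈ range τ, ((i : R) + 1) * w (k + 1 - τ + i)
      = ∑ i ∈ range τ, ((i + 1 : ℕ) : R) * q (i + 1) :=
        sum_congr rfl fun i _ => by simp only [q]; push_cast; ring_nf
    _ = ∑ i ∈ range (τ + 1), (i : R) * q i := by simp [sum_range_succ' _ τ]
    _ = ∑ i ∈ range τ, (i : R) * q i + τ * q τ := sum_range_succ _ τ
    _ = _ := by simp only [← hqτ, add_mul, one_mul, sum_add_distrib]; ring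

lemma sum_Ico_window_increments {E : Type*} [AddCommGroup E] (z : ℤ → E) (k : ℤ) {τ d : ℕ}
    (hd : d ≤ τ) :
    ∑ i ∈ Ico (τ - d) τ, (z (k - τ + i + 1) - z (k - τ + i)) = z k - z (k - d) := by
  have := sum_Ico_sub (fun n : ℕ => z (k - τ + n)) (Nat.sub_le τ d)
  push_cast [Nat.cast_sub hd] at this
  convert this using 2 <;> ring_nf

/-- A nonzero window increment `i` sits at the active time `k - τ + i ≥ 0`. -/
lemma card_le_ncard_active_of_increment_ne {E : Type*} (z : ℤ → E) (active : ℕ → Prop)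
    (hz0 : ∀ h : ℤ, h ≤ 0 → z h = z 0) (hstay : ∀ n : ℕ, ¬ active n → z (n + 1) = z n)
    (k τ : ℕ) {T : Finset ℕ} (hT : ∀ i ∈ T, i < τ ∧ z (k - τ + i + 1) ≠ z (k - τ + i)) :
    #T ≤ Set.ncard {h : ℕ | k - τ ≤ h ∧ h ≤ k ∧ active h} := by
  have hnonneg : ∀ i ∈ T, 0 ≤ (k : ℤ) - τ + i := fun i hi => by
    by_contra! hneg
    exact (hT i hi).2 (by rw [hz0 _ (by omega), hz0 _ hneg.le])
  have hinj : Set.InjOn (fun i : ℕ => ((k : ℤ) - τ + i).toNat) T := fun i hi i' hi' h => by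
    have := hnonneg i hi; have := hnonneg i' hi'; simp only at h; omega
  rw [← card_image_of_injOn hinj, ← Set.ncard_coe_finset]
  refine Set.ncard_le_ncard ?_ ((Set.finite_Iic k).subset fun n hn => hn.2.1)
  rw [coe_image]
  rintro _ ⟨i, hi, rfl⟩
  have hi0 := hnonneg i hi
  obtain ⟨hiτ, hne⟩ := hT i hi
  simp only [Set.mem_ofPred_eq]
  refine ⟨by omega, by omega, by_contra fun hinactive => hne ?_⟩
  have hcast : ((((k : ℤ) - τ + i).toNat : ℕ) : ℤ) = (k : ℤ) - τ + i := Int.toNat_of_nonneg hi0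
  simpa [hcast] using hstay _ hinactive

lemma norm_sub_delayed_sq_le {E : Type*} [SeminormedAddCommGroup E] (z : ℤ → E)
    (active : ℕ → Prop) (hz0 : ∀ h : ℤ, h ≤ 0 → z h = z 0)
    (hstay : ∀ n : ℕ, ¬ active n → z (n + 1) = z n) {k τ d ρ : ℕ} (hd : d ≤ τ)
    (hcount : Set.ncard {h : ℕ | k - τ ≤ h ∧ h ≤ k ∧ active h} ≤ ρ) :
    ‖z k - z ((k : ℤ) - d)‖ ^ 2 ≤ ρ * ∑ i ∈ range τ, ‖z (k - τ + i + 1) - z (k - τ + i)‖ ^ 2 := by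
  classical
  set v : ℕ → E := fun i => z (k - τ + i + 1) - z (k - τ + i)
  set T := (Ico (τ - d) τ).filter (fun i => v i ≠ 0)
  have hcard : #T ≤ ρ := by
    refine le_trans ?_ hcount
    refine card_le_ncard_active_of_increment_ne z active hz0 hstay k τ fun i hi => ?_
    rw [mem_filter, mem_Ico] at hi
    exact ⟨hi.1.2, sub_ne_zero.mp hi.2⟩
  calc ‖z k - z ((k : ℤ) - d)‖ ^ 2 = ‖∑ i ∈ Ico (τ - d) τ, v i‖ ^ 2 := by
        rw [sum_Ico_window_increments z k hd]
    _ ≤ #T * ∑ i ∈ Ico (τ - d) τ, ‖v i‖ ^ 2 :=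
        norm_sum_sq_le_card_mul_sum_norm_sq v (filter_subset _ _) fun i hi hiT => by
          simpa [T, hi] using hiT
    _ ≤ ρ * ∑ i ∈ range τ, ‖v i‖ ^ 2 :=
        mul_le_mul (by exact_mod_cast hcard)
          (sum_le_sum_of_subset_of_nonneg (fun i hi => mem_range.mpr (mem_Ico.mp hi).2)
            fun _ _ _ => sq_nonneg _) (by positivity) (by positivity)

section Blocks

variable {m : ℕ} {H : Fin m → Type*} [∀ j, NormedAddCommGroup (H j)]

lemma sqNorm_eq_norm_sq_of_ne_eq_zero {y : ∀ j, H j} (j₀ : Fin m)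
    (hy : ∀ j, j ≠ j₀ → y j = 0) : sqNorm y = ‖y j₀‖ ^ 2 :=
  sum_eq_single j₀ (fun j _ hj => by rw [hy j hj, norm_zero, sq, zero_mul])
    fun h => absurd (mem_univ _) h

noncomputable def stepSqNorm (x : ℤ → ∀ j, H j) (h : ℤ) : ℝ := sqNorm (x (h + 1) - x h)

lemma sum_range_weighted_sqNorm_eq (x : ℤ → ∀ j, H j) (k : ℤ) (τ : ℕ) :
    ∑ i ∈ range τ, ((i : ℝ) + 1) * sqNorm (x (k - τ + 1 + i) - x (k - τ + i)) =
      ∑ i ∈ range τ, ((i : ℝ) + 1) * stepSqNorm x (k - τ + i) := by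
  simp only [stepSqNorm, add_right_comm _ (1 : ℤ)]

lemma sqNorm_sub_delayed_le (x : ℤ → ∀ j, H j) (jj : ℕ → Fin m) (d : Fin m → ℕ)
    (xd : ∀ j, H j) {k τ ρ : ℕ} (hx0 : ∀ h : ℤ, h ≤ 0 → x h = x 0)
    (hoff : ∀ (n : ℕ) (j : Fin m), j ≠ jj n → x ((n : ℤ) + 1) j = x n j)
    (hd : ∀ j, d j ≤ τ) (hcount : ∀ j, Set.ncard {h : ℕ | k - τ ≤ h ∧ h ≤ k ∧ jj h = j} ≤ ρ)
    (hxd : ∀ j, xd j = x ((k : ℤ) - d j) j) :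
    sqNorm (x k - xd) ≤ ρ * ∑ i ∈ range τ, stepSqNorm x (k - τ + i) := by
  have hblock j := norm_sub_delayed_sq_le (fun h => x h j) (fun n => jj n = j)
    (fun h hh => congrFun (hx0 h hh) j) (fun n hn => hoff n j (Ne.symm hn)) (hd j) (hcount j)
  calc sqNorm (x k - xd) = ∑ j, ‖x k j - x ((k : ℤ) - d j) j‖ ^ 2 := by
        simp only [sqNorm, Pi.sub_apply, hxd]
    _ ≤ ∑ j, ρ * ∑ i ∈ range τ, ‖x (k - τ + i + 1) j - x (k - τ + i) j‖ ^ 2 :=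
        sum_le_sum fun j _ => hblock j
    _ = ρ * ∑ i ∈ range τ, stepSqNorm x (k - τ + i) := by
        rw [← mul_sum, sum_comm]; rfl

end Blocks

theorem stmt_5_general {m : ℕ}
    (H : Fin m → Type*) [∀ j, NormedAddCommGroup (H j)]
    [∀ j, InnerProductSpace ℝ (H j)] [∀ j, FiniteDimensional ℝ (H j)]
    (f : (∀ j, H j) → ℝ)
    -- parameters
    (τ ρτ : ℕ) (hτ : 1 ≤ τ)
    (M : ℝ) (hM : 0 < M)
    -- the iterates, extended by x^h = x^0 for h ≤ 0
    (x : ℤ → ∀ j, H j) (hx0 : ∀ h : ℤ, h ≤ 0 → x h = x 0)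
    -- active blocks and delays
    (jj : ℕ → Fin m) (d : ℕ → Fin m → ℕ) (hd : ∀ k j, d k j ≤ τ)
    (hcount : ∀ (k : ℕ) (j : Fin m),
      Set.ncard {h : ℕ | k - τ ≤ h ∧ h ≤ k ∧ jj h = j} ≤ ρτ)
    -- the delayed iterate x^{k-d_k}
    (xd : ℕ → ∀ j, H j) (hxd : ∀ (k : ℕ) (j : Fin m), xd k j = x ((k : ℤ) - d k j) j)
    -- the update: only block j_k moves, and it moves to a minimizer of the prox-subproblem
    (hoff : ∀ (k : ℕ) (j : Fin m), j ≠ jj k → x ((k : ℤ) + 1) j = x k j)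
    -- (ii) delayed-gradient bound
    (hMd : ∀ k : ℕ,
      ‖pgrad f (x k) (jj k) (x k (jj k)) - pgrad f (xd k) (jj k) (xd k (jj k))‖ ≤
        M * Real.sqrt (sqNorm (x k - xd k)))
    -- κ_k, the Lyapunov value Φ_k, and the constant C
    (κ : ℕ → ℝ)
    (hκ : ∀ k : ℕ, κ k = (M * Real.sqrt ρτ / (2 * Real.sqrt τ)) *
      ∑ i ∈ Finset.range τ,
        ((i : ℝ) + 1) * sqNorm (x ((k : ℤ) - τ + 1 + i) - x ((k : ℤ) - τ + i))) :
    ∀ k : ℕ, κ (k + 1) ≤ κ k -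
      ⟪pgrad f (x k) (jj k) (x k (jj k)) - pgrad f (xd k) (jj k) (xd k (jj k)),
        x ((k : ℤ) + 1) (jj k) - x k (jj k)⟫ +
      M * Real.sqrt ((ρτ : ℝ) * τ) * ‖x ((k : ℤ) + 1) (jj k) - x k (jj k)‖ ^ 2 := by
  intro k
  have hτpos : (0 : ℝ) < τ := by exact_mod_cast hτ
  set a := M * √ρτ / (2 * √τ)
  set S := ∑ i ∈ range τ, stepSqNorm x (k - τ + i)
  set u := x ((k : ℤ) + 1) (jj k) - x k (jj k)
  have hS : 0 ≤ S := sum_nonneg fun _ _ => by simp only [stepSqNorm, sqNorm]; positivity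
  have hstep : stepSqNorm x k = ‖u‖ ^ 2 :=
    sqNorm_eq_norm_sq_of_ne_eq_zero (jj k) fun j hj => sub_eq_zero.mpr (hoff k j hj)
  have hκ_succ : κ (k + 1) = κ k + a * (τ * ‖u‖ ^ 2 - S) := by
    rw [hκ, hκ, sum_range_weighted_sqNorm_eq, sum_range_weighted_sqNorm_eq, Nat.cast_succ,
      sum_range_weighted_window_succ, hstep]
    ring
  have hdelay := sqNorm_sub_delayed_le x jj (d k) (xd k) hx0 hoff (hd k) (hcount k) (hxd k)
  have hgrad : ‖pgrad f (x k) (jj k) (x k (jj k)) - pgrad f (xd k) (jj k) (xd k (jj k))‖ ≤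
      M * √ρτ * √S := by
    rw [mul_assoc, ← Real.sqrt_mul (Nat.cast_nonneg _)]
    exact (hMd k).trans (mul_le_mul_of_nonneg_left (Real.sqrt_le_sqrt hdelay) hM.le)
  have hinner := real_inner_le_of_norm_le_mul_sqrt (u := u) (by positivity) hS hτpos hgrad
  have hcoef : M * √((ρτ : ℝ) * τ) = 2 * a * τ := by
    have hsqrt : √(τ : ℝ) * √τ = τ := Real.mul_self_sqrt hτpos.le
    simp only [a, Real.sqrt_mul (Nat.cast_nonneg _)]
    field_simp
    linear_combination √(ρτ : ℝ) * hsqrt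
  rw [hcoef]
  linarith

theorem stmt_5 {m : ℕ} (hm : 1 ≤ m)
    (H : Fin m → Type*) [∀ j, NormedAddCommGroup (H j)]
    [∀ j, InnerProductSpace ℝ (H j)] [∀ j, FiniteDimensional ℝ (H j)]
    -- f is C¹
    (f : (∀ j, H j) → ℝ) (hf : ContDiff ℝ 1 f)
    -- each r_j is proper and lower semicontinuous with values in (−∞, +∞]
    (r : ∀ j, H j → EReal)
    (hr_ne_top : ∀ j, ∃ y, r j y ≠ ⊤) (hr_ne_bot : ∀ j y, r j y ≠ ⊥)
    (hr_lsc : ∀ j, LowerSemicontinuous (r j))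
    -- Ψ = f + Σ_j r_j, bounded below
    (Ψ : (∀ j, H j) → EReal) (hΨ : ∀ x, Ψ x = (f x : EReal) + ∑ j, r j (x j))
    (hΨbdd : ∃ B : ℝ, ∀ x, (B : EReal) ≤ Ψ x)
    -- parameters
    (τ ρτ : ℕ) (hτ : 1 ≤ τ) (hρτ1 : 1 ≤ ρτ) (hρττ : ρτ ≤ τ)
    (c M L γmin : ℝ) (hc0 : 0 < c) (hc1 : c < 1) (hM : 0 < M) (hL : 0 < L)
    (hγmin : 0 < γmin)
    -- the iterates, extended by x^h = x^0 for h ≤ 0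
    (x : ℤ → ∀ j, H j) (hx0 : ∀ h : ℤ, h ≤ 0 → x h = x 0)
    (hΨx0 : Ψ (x 0) < ⊤)
    -- active blocks and delays
    (jj : ℕ → Fin m) (d : ℕ → Fin m → ℕ) (hd : ∀ k j, d k j ≤ τ)
    (hcount : ∀ (k : ℕ) (j : Fin m),
      Set.ncard {h : ℕ | k - τ ≤ h ∧ h ≤ k ∧ jj h = j} ≤ ρτ)
    -- the delayed iterate x^{k-d_k}
    (xd : ℕ → ∀ j, H j) (hxd : ∀ (k : ℕ) (j : Fin m), xd k j = x ((k : ℤ) - d k j) j)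
    -- stepsizes
    (γ : ℕ → ℝ)
    (hγ : ∀ k, γmin ≤ γ k ∧ γ k ≤ c / (L + 2 * M * Real.sqrt ((ρτ : ℝ) * τ)))
    -- the update: only block j_k moves, and it moves to a minimizer of the prox-subproblem
    (hoff : ∀ (k : ℕ) (j : Fin m), j ≠ jj k → x ((k : ℤ) + 1) j = x k j)
    (hprox : ∀ (k : ℕ) (y : H (jj k)),
      r (jj k) (x ((k : ℤ) + 1) (jj k)) +
        ((⟪pgrad f (xd k) (jj k) (xd k (jj k)), x ((k : ℤ) + 1) (jj k) - x k (jj k)⟫ +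
            (1 / (2 * γ k)) * ‖x ((k : ℤ) + 1) (jj k) - x k (jj k)‖ ^ 2 : ℝ) : EReal) ≤
      r (jj k) y +
        ((⟪pgrad f (xd k) (jj k) (xd k (jj k)), y - x k (jj k)⟫ +
            (1 / (2 * γ k)) * ‖y - x k (jj k)‖ ^ 2 : ℝ) : EReal))
    -- (i) partial-gradient Lipschitz moduli, bounded by L
    (Lip : ℕ → Fin m → ℝ)
    (hLip : ∀ (k : ℕ) (j : Fin m) (y y' : H j),
      ‖pgrad f (x k) j y - pgrad f (x k) j y'‖ ≤ Lip k j * ‖y - y'‖)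
    (hLipL : ∀ k j, Lip k j ≤ L)
    -- (ii) delayed-gradient bound
    (hMd : ∀ k : ℕ,
      ‖pgrad f (x k) (jj k) (x k (jj k)) - pgrad f (xd k) (jj k) (xd k (jj k))‖ ≤
        M * Real.sqrt (sqNorm (x k - xd k)))
    -- κ_k, the Lyapunov value Φ_k, and the constant C
    (κ : ℕ → ℝ)
    (hκ : ∀ k : ℕ, κ k = (M * Real.sqrt ρτ / (2 * Real.sqrt τ)) *
      ∑ i ∈ Finset.range τ,
        ((i : ℝ) + 1) * sqNorm (x ((k : ℤ) - τ + 1 + i) - x ((k : ℤ) - τ + i)))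
    (Φ : ℕ → EReal) (hΦ : ∀ k : ℕ, Φ k = Ψ (x k) + (κ k : EReal))
    (C : ℝ) (hC : C = (1 / 2) * (1 / c - 1) * (L + 2 * M * Real.sqrt ((ρτ : ℝ) * τ))) :
    ∀ k : ℕ, κ (k + 1) ≤ κ k -
      ⟪pgrad f (x k) (jj k) (x k (jj k)) - pgrad f (xd k) (jj k) (xd k (jj k)),
        x ((k : ℤ) + 1) (jj k) - x k (jj k)⟫ +
      M * Real.sqrt ((ρτ : ℝ) * τ) * ‖x ((k : ℤ) + 1) (jj k) - x k (jj k)‖ ^ 2 :=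
  stmt_5_general H f τ ρτ hτ M hM x hx0 jj d hd hcount xd hxd hoff hMd κ hκ
end

section
/- The average over the m possible single-block prox-gradient updates decreases the Lyapunov value: (1/m) Σ_{j=1}^m [ f(x^{k+1,(j)}) + r(x^{k+1,(j)}) + κ_{k+1}^{(j)} ] ≤ f(x^k) + r(x^k) + κ_k − (1/(2m)) Σ_{j=1}^m (1/γ_j^k − L_j(x^k_{−j}) − 2Mτ/√m) ‖w_j^k − x_j^k‖². -/
open Finset RealInnerProductSpace

theorem descent_lemma {E : Type*} [NormedAddCommGroup E] [InnerProductSpace ℝ E]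
    [CompleteSpace E] {g : E → ℝ} {G : E → E} {L : ℝ} (hg : ∀ z, HasGradientAt g (G z) z)
    (hG : ∀ z z', ‖G z - G z'‖ ≤ L * ‖z - z'‖) (p v : E) :
    g (p + v) ≤ g p + ⟪G p, v⟫ + L / 2 * ‖v‖ ^ 2 := by
  set ψ : ℝ → ℝ := fun t => g (p + t • v) - t * ⟪G p, v⟫ - L / 2 * t ^ 2 * ‖v‖ ^ 2
  have hψ : ∀ t, HasDerivAt ψ (⟪G (p + t • v) - G p, v⟫ - L * t * ‖v‖ ^ 2) t := by
    intro t
    have hline : HasDerivAt (fun t : ℝ => p + t • v) v t := by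
      simpa using ((hasDerivAt_id t).smul_const v).const_add p
    refine ((((hg _).hasFDerivAt.comp_hasDerivAt t hline).sub
      ((hasDerivAt_id t).mul_const ⟪G p, v⟫)).sub
      (((hasDerivAt_pow 2 t).const_mul (L / 2)).mul_const (‖v‖ ^ 2))).congr_deriv ?_
    simp only [InnerProductSpace.toDual_apply_apply, inner_sub_left]
    ring
  have hanti : AntitoneOn ψ (Set.Icc 0 1) := by
    refine antitoneOn_of_deriv_nonpos (convex_Icc 0 1)
      (fun t _ => (hψ t).continuousAt.continuousWithinAt)
      (fun t _ => (hψ t).differentiableAt.differentiableWithinAt) fun t ht => ?_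
    rw [interior_Icc] at ht
    rw [(hψ t).deriv, sub_nonpos]
    calc ⟪G (p + t • v) - G p, v⟫ ≤ ‖G (p + t • v) - G p‖ * ‖v‖ := real_inner_le_norm _ _
      _ ≤ L * ‖t • v‖ * ‖v‖ := by gcongr; simpa using hG (p + t • v) p
      _ = L * t * ‖v‖ ^ 2 := by rw [norm_smul, Real.norm_of_nonneg ht.1.le]; ring
  have := hanti (Set.left_mem_Icc.2 zero_le_one) (Set.right_mem_Icc.2 zero_le_one) zero_le_one
  norm_num [ψ] at this
  linarith

theorem sum_range_succ_mul_shift (b : ℕ → ℝ) (τ : ℕ) :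
    ∑ i ∈ range τ, ((i : ℝ) + 1) * b (i + 1) =
      ∑ i ∈ range τ, ((i : ℝ) + 1) * b i - ∑ i ∈ range τ, b i + τ * b τ := by
  induction τ with
  | zero => simp
  | succ τ ih => simp only [sum_range_succ, ih]; push_cast; ring

theorem norm_sub_sq_le_of_delay {E : Type*} [SeminormedAddCommGroup E] (u : ℤ → E) (k : ℤ)
    {d τ : ℕ} (hd : d ≤ τ) :
    ‖u k - u (k - d)‖ ^ 2 ≤ τ * ∑ i ∈ range τ, ‖u (k - τ + 1 + i) - u (k - τ + i)‖ ^ 2 := by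
  set e : ℕ → ℝ := fun i => ‖u (k - i) - u (k - (i + 1 : ℕ))‖
  have htel : u k - u (k - d) = ∑ i ∈ range d, (u (k - i) - u (k - (i + 1 : ℕ))) := by
    simpa using (sum_range_sub' (fun i : ℕ => u (k - i)) d).symm
  have hrefl : ∑ i ∈ range τ, ‖u (k - τ + 1 + i) - u (k - τ + i)‖ ^ 2 =
      ∑ i ∈ range τ, e i ^ 2 := by
    rw [← sum_range_reflect]
    refine sum_congr rfl fun i hi => ?_
    rw [mem_range] at hi
    simp only [e]
    congr 4 <;> omega
  calc ‖u k - u (k - d)‖ ^ 2 ≤ (∑ i ∈ range d, e i) ^ 2 := by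
        rw [htel]; gcongr; exact norm_sum_le _ _
    _ ≤ d * ∑ i ∈ range d, e i ^ 2 := by
        simpa using sq_sum_le_card_mul_sum_sq (s := range d) (f := e)
    _ ≤ τ * ∑ i ∈ range τ, e i ^ 2 := by gcongr
    _ = _ := by rw [hrefl]

section Product

variable {m : ℕ} {H : Fin m → Type*} [∀ j, NormedAddCommGroup (H j)]

theorem sqNorm_nonneg (x : ∀ j, H j) : 0 ≤ sqNorm x :=
  sum_nonneg fun _ _ => sq_nonneg _

theorem sqNorm_update_sub_self (p : ∀ j, H j) (j : Fin m) (w : H j) :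
    sqNorm (Function.update p j w - p) = ‖w - p j‖ ^ 2 := by
  rw [sqNorm, Fintype.sum_eq_single j fun i hi => by simp [Function.update_of_ne hi]]
  simp

theorem sqNorm_sub_le_of_delay (u : ℤ → ∀ j, H j) (k : ℤ) {d : Fin m → ℕ} {τ : ℕ}
    (hd : ∀ j, d j ≤ τ) {xd : ∀ j, H j} (hxd : ∀ j, xd j = u (k - d j) j) :
    sqNorm (u k - xd) ≤ τ * ∑ i ∈ range τ, sqNorm (u (k - τ + 1 + i) - u (k - τ + i)) := by
  simp only [sqNorm, Pi.sub_apply, hxd]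
  rw [sum_comm, mul_sum]
  exact sum_le_sum fun j _ => norm_sub_sq_le_of_delay (fun h => u h j) k (hd j)

theorem weighted_window_sqNorm_succ (u u' : ℤ → ∀ j, H j) (k : ℤ) (τ : ℕ)
    (hu : ∀ h ≤ k, u' h = u h) :
    ∑ i ∈ range τ, ((i : ℝ) + 1) * sqNorm (u' (k + 1 - τ + 1 + i) - u' (k + 1 - τ + i)) =
      ∑ i ∈ range τ, ((i : ℝ) + 1) * sqNorm (u (k - τ + 1 + i) - u (k - τ + i)) -
        ∑ i ∈ range τ, sqNorm (u (k - τ + 1 + i) - u (k - τ + i)) +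
        τ * sqNorm (u' (k + 1) - u k) := by
  set b : ℕ → ℝ := fun i => sqNorm (u' (k - τ + 1 + i) - u' (k - τ + i))
  have hb : ∀ i ∈ range τ, b i = sqNorm (u (k - τ + 1 + i) - u (k - τ + i)) := by
    intro i hi
    rw [mem_range] at hi
    simp only [b]
    rw [hu _ (by omega), hu _ (by omega)]
  have hτ : b τ = sqNorm (u' (k + 1) - u k) := by
    simp only [b]
    rw [show k - τ + 1 + τ = k + 1 by ring, show k - τ + τ = k by ring, hu k le_rfl]
  calc _ = ∑ i ∈ range τ, ((i : ℝ) + 1) * b (i + 1) :=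
        sum_congr rfl fun i _ => by simp only [b]; congr 4 <;> push_cast <;> ring
    _ = _ := sum_range_succ_mul_shift b τ
    _ = _ := by
        rw [← sum_congr rfl hb, hτ]
        congr 2
        exact sum_congr rfl fun i hi => by rw [hb i hi]

end Product

section InnerProduct

variable {m : ℕ} {H : Fin m → Type*} [∀ j, NormedAddCommGroup (H j)]
  [∀ j, InnerProductSpace ℝ (H j)]

theorem sum_inner_le_sqrt_sqNorm_mul_sqrt_sqNorm (a b : ∀ j, H j) :
    ∑ j, ⟪a j, b j⟫ ≤ √(sqNorm a) * √(sqNorm b) :=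
  (sum_le_sum fun j _ => real_inner_le_norm (a j) (b j)).trans
    (Real.sum_mul_le_sqrt_mul_sqrt _ _ _)

variable [∀ j, FiniteDimensional ℝ (H j)] {f : (∀ j, H j) → ℝ}

theorem hasGradientAt_pgrad (hf : Differentiable ℝ f) (p : ∀ j, H j) (j : Fin m) (z : H j) :
    HasGradientAt (fun y => f (Function.update p j y)) (pgrad f p j z) z :=
  ((hf _).comp z (hasFDerivAt_update p z).differentiableAt).hasGradientAt

theorem apply_update_le_of_lipschitz_pgrad (hf : Differentiable ℝ f) {p : ∀ j, H j} {j : Fin m}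
    {L : ℝ} (hL : ∀ y y', ‖pgrad f p j y - pgrad f p j y'‖ ≤ L * ‖y - y'‖) (w : H j) :
    f (Function.update p j w) ≤ f p + ⟪pgrad f p j (p j), w - p j⟫ + L / 2 * ‖w - p j‖ ^ 2 := by
  simpa using descent_lemma (hasGradientAt_pgrad hf p j) hL (p j) (w - p j)

end InnerProduct

theorem two_mul_mul_le_of_sq_le {s a b S : ℝ} {τ : ℕ} (ha : 0 ≤ a) (hS : 0 ≤ S)
    (hab : a ^ 2 ≤ τ * S) : 2 * s * a * b ≤ s ^ 2 * S + τ * b ^ 2 := by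
  rcases Nat.eq_zero_or_pos τ with rfl | hτ
  · obtain rfl : a = 0 := by simp at hab; nlinarith
    nlinarith [sq_nonneg s]
  · have hτ' : (0 : ℝ) < τ := by exact_mod_cast hτ
    refine le_of_mul_le_mul_left ?_ hτ'
    nlinarith [sq_nonneg (s * a - τ * b), mul_le_mul_of_nonneg_left hab (sq_nonneg s)]

theorem sum_inner_le_of_delay {m : ℕ} {H : Fin m → Type*} [∀ j, NormedAddCommGroup (H j)]
    [∀ j, InnerProductSpace ℝ (H j)] {Δ v : ∀ j, H j} {M A S : ℝ} {τ : ℕ} (hm : 0 < m)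
    (hM : 0 ≤ M) (hA : 0 ≤ A) (hS : 0 ≤ S) (hΔ : √(sqNorm Δ) ≤ M * √A) (hAS : A ≤ τ * S) :
    ∑ j, ⟪Δ j, v j⟫ ≤ M / (2 * √m) * (m * S + τ * ∑ j, ‖v j‖ ^ 2) := by
  have hs : 0 < √(m : ℝ) := Real.sqrt_pos.2 (by exact_mod_cast hm)
  have hyoung := two_mul_mul_le_of_sq_le (s := √m) (b := √(sqNorm v)) (Real.sqrt_nonneg A) hS
    (by rwa [Real.sq_sqrt hA])
  rw [Real.sq_sqrt (sqNorm_nonneg v), Real.sq_sqrt (Nat.cast_nonneg m)] at hyoung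
  calc ∑ j, ⟪Δ j, v j⟫ ≤ √(sqNorm Δ) * √(sqNorm v) :=
        sum_inner_le_sqrt_sqNorm_mul_sqrt_sqNorm Δ v
    _ ≤ M * √A * √(sqNorm v) := by gcongr
    _ ≤ _ := by
        rw [div_mul_eq_mul_div, le_div_iff₀ (by positivity)]
        exact (mul_le_mul_of_nonneg_left hyoung hM).trans_eq' (by ring)

theorem average_le_of_blockwise {ι : Type*} [Fintype ι] [Nonempty ι] {F κ σ S τ : ℝ}
    {φ ρ ρw κ' Lip γ a ad n : ι → ℝ}
    (hφ : ∀ j, φ j ≤ F + a j + Lip j / 2 * n j)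
    (hρ : ∀ j, ρw j + (ad j + 1 / (2 * γ j) * n j) ≤ ρ j)
    (hκ : ∀ j, κ' j = κ - σ * S + σ * τ * n j)
    (had : ∑ j, (a j - ad j) ≤ σ * (Fintype.card ι * S + τ * ∑ j, n j)) :
    1 / (Fintype.card ι : ℝ) * ∑ j, (φ j + (∑ i, ρ i - ρ j + ρw j) + κ' j) ≤
      F + ∑ i, ρ i + κ -
        1 / (2 * Fintype.card ι) * ∑ j, (1 / γ j - Lip j - 4 * σ * τ) * n j := by
  set c : ℝ := (Fintype.card ι : ℝ)
  have hc : 0 < c := by simp only [c]; exact_mod_cast Fintype.card_pos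
  have hblock : ∀ j, φ j + (∑ i, ρ i - ρ j + ρw j) + κ' j ≤
      F + ∑ i, ρ i + κ - σ * S + (a j - ad j) - (1 / (2 * γ j) - Lip j / 2 - σ * τ) * n j := by
    intro j
    linarith [hφ j, hρ j, hκ j]
  have hsplit : ∑ j, (1 / (2 * γ j) - Lip j / 2 - σ * τ) * n j =
      1 / 2 * ∑ j, (1 / γ j - Lip j - 4 * σ * τ) * n j + σ * τ * ∑ j, n j := by
    rw [mul_sum, mul_sum, ← sum_add_distrib]
    exact sum_congr rfl fun j _ => by ring
  have hsum : ∑ j, (φ j + (∑ i, ρ i - ρ j + ρw j) + κ' j) ≤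
      c * (F + ∑ i, ρ i + κ - σ * S) + ∑ j, (a j - ad j) -
        ∑ j, (1 / (2 * γ j) - Lip j / 2 - σ * τ) * n j := by
    refine (sum_le_sum fun j _ => hblock j).trans_eq ?_
    rw [sum_sub_distrib, sum_add_distrib, sum_const, card_univ, nsmul_eq_mul]
  have hhalf : c * (1 / (2 * c) * ∑ j, (1 / γ j - Lip j - 4 * σ * τ) * n j) =
      1 / 2 * ∑ j, (1 / γ j - Lip j - 4 * σ * τ) * n j := by
    field_simp
  rw [one_div, inv_mul_le_iff₀ hc, mul_sub, hhalf]
  linarith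

namespace EReal

@[simp, norm_cast]
theorem coe_finset_sum {ι : Type*} (s : Finset ι) (f : ι → ℝ) :
    ((∑ i ∈ s, f i : ℝ) : EReal) = ∑ i ∈ s, (f i : EReal) :=
  map_sum (⟨⟨Real.toEReal, coe_zero⟩, coe_add⟩ : ℝ →+ EReal) f s

theorem sum_eq_top_of_mem {ι : Type*} [DecidableEq ι] {s : Finset ι} {f : ι → EReal} {j : ι}
    (hj : j ∈ s) (htop : f j = ⊤) (hbot : ∀ i ∈ s, f i ≠ ⊥) : ∑ i ∈ s, f i = ⊤ := by
  rw [← add_sum_erase s f hj, htop, top_add_of_ne_bot]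
  exact sum_induction f (· ≠ ⊥) (fun _ _ ha hb => add_ne_bot_iff.2 ⟨ha, hb⟩) zero_ne_bot
    fun i hi => hbot i (mem_of_mem_erase hi)

theorem exists_coe_of_add_coe_le_coe {a : EReal} {b c : ℝ} (ha : a ≠ ⊥) (h : a + b ≤ c) :
    ∃ a' : ℝ, a = a' ∧ a' + b ≤ c := by
  have ha' : a ≠ ⊤ := by
    rintro rfl
    simp at h
  refine ⟨a.toReal, (coe_toReal ha' ha).symm, ?_⟩
  rwa [← coe_toReal ha' ha, ← coe_add, EReal.coe_le_coe_iff] at h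

end EReal

theorem sum_apply_update_eq_coe {ι : Type*} [Fintype ι] [DecidableEq ι] {α : ι → Type*}
    (r : ∀ i, α i → EReal) {p : ∀ i, α i} {j : ι} {w : α j} {ρ : ι → ℝ} {b : ℝ}
    (hρ : ∀ i, r i (p i) = ρ i) (hb : r j w = b) :
    ∑ i, r i (Function.update p j w i) = ((∑ i, ρ i - ρ j + b : ℝ) : EReal) := by
  have hupd : ∀ i, r i (Function.update p j w i) = ((Function.update ρ j b i : ℝ) : EReal) := by
    intro i
    rcases eq_or_ne i j with rfl | hi
    · simp [hb]
    · simp [Function.update_of_ne hi, hρ]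
  rw [sum_congr rfl fun i _ => hupd i, ← EReal.coe_finset_sum, sum_update_of_mem (mem_univ j),
    ← add_sum_erase _ ρ (mem_univ j), sdiff_singleton_eq_erase]
  congr 1
  ring

theorem stmt_8_general {m : ℕ} (hm : 1 ≤ m)
    (H : Fin m → Type*) [∀ j, NormedAddCommGroup (H j)]
    [∀ j, InnerProductSpace ℝ (H j)] [∀ j, FiniteDimensional ℝ (H j)]
    (f : (∀ j, H j) → ℝ) (hf : ContDiff ℝ 1 f)
    (r : ∀ j, H j → EReal)
    (hr_ne_bot : ∀ j y, r j y ≠ ⊥)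
    (τ : ℕ) (M : ℝ) (hM : 0 < M) (k : ℕ)
    -- the trajectory x^0, …, x^k, extended by x^h = x^0 for h ≤ 0
    (x : ℤ → ∀ j, H j)
    -- delay vector and delayed iterate x^{k-d_k}
    (d : Fin m → ℕ) (hd : ∀ j, d j ≤ τ)
    (xd : ∀ j, H j) (hxd : ∀ j, xd j = x ((k : ℤ) - d j) j)
    -- ‖∇f(x^k) − ∇f(x^{k−d_k})‖ ≤ M ‖x^k − x^{k−d_k}‖
    (hMd : Real.sqrt (sqNorm (fun j => pgrad f (x k) j (x k j) - pgrad f xd j (xd j))) ≤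
      M * Real.sqrt (sqNorm (x k - xd)))
    -- partial-gradient Lipschitz moduli L_j(x^k_{−j})
    (Lip : Fin m → ℝ)
    (hLip : ∀ (j : Fin m) (y y' : H j),
      ‖pgrad f (x k) j y - pgrad f (x k) j y'‖ ≤ Lip j * ‖y - y'‖)
    -- stepsizes and the prox-gradient updates w_j^k
    (γ : Fin m → ℝ)
    (w : ∀ j, H j)
    (hprox : ∀ (j : Fin m) (y : H j),
      r j (w j) +
          ((⟪pgrad f xd j (xd j), w j - x k j⟫ + (1 / (2 * γ j)) * ‖w j - x k j‖ ^ 2 : ℝ) : EReal) ≤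
        r j y +
          ((⟪pgrad f xd j (xd j), y - x k j⟫ + (1 / (2 * γ j)) * ‖y - x k j‖ ^ 2 : ℝ) : EReal))
    -- x^{k+1,(j)} = x^k with block j replaced by w_j^k
    (X : Fin m → ∀ j', H j') (hX : ∀ j, X j = Function.update (x k) j (w j))
    -- the trajectory continued by x^{k+1} := x^{k+1,(j)}
    (y : Fin m → ℤ → ∀ j', H j')
    (hy : ∀ (j : Fin m) (h : ℤ), y j h = if h = (k : ℤ) + 1 then X j else x h)
    -- κ_k and κ_{k+1}^{(j)}
    (κk : ℝ)
    (hκk : κk = (M / (2 * Real.sqrt m)) * ∑ i ∈ Finset.range τ,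
      ((i : ℝ) + 1) * sqNorm (x ((k : ℤ) - τ + 1 + i) - x ((k : ℤ) - τ + i)))
    (κ' : Fin m → ℝ)
    (hκ' : ∀ j, κ' j = (M / (2 * Real.sqrt m)) * ∑ i ∈ Finset.range τ,
      ((i : ℝ) + 1) *
        sqNorm (y j ((k : ℤ) + 1 - τ + 1 + i) - y j ((k : ℤ) + 1 - τ + i))) :
    ((1 / (m : ℝ) : ℝ) : EReal) *
        ∑ j, ((f (X j) : EReal) + ∑ j', r j' (X j j') + (κ' j : EReal)) ≤
      (f (x k) : EReal) + ∑ j', r j' (x k j') + (κk : EReal) -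
        (((1 / (2 * (m : ℝ))) * ∑ j, (1 / γ j - Lip j - 2 * M * (τ : ℝ) / Real.sqrt m) *
            ‖w j - x k j‖ ^ 2 : ℝ) : EReal) := by
  classical
  by_cases htop : ∃ j, r j (x k j) = ⊤
  · obtain ⟨j, hj⟩ := htop
    rw [EReal.sum_eq_top_of_mem (mem_univ j) hj fun i _ => hr_ne_bot i _,
      EReal.add_top_of_ne_bot (EReal.coe_ne_bot _), EReal.top_add_coe, EReal.top_sub_coe]
    exact le_top
  push Not at htop
  choose ρ hρ using fun j => (⟨_, (EReal.coe_toReal (htop j) (hr_ne_bot j _)).symm⟩ :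
    ∃ a : ℝ, r j (x k j) = a)
  choose ρw hρw hprox_self using fun j => EReal.exists_coe_of_add_coe_le_coe (c := ρ j)
    (hr_ne_bot j (w j)) ((hprox j (x k j)).trans_eq (by simp [hρ]))
  have : Nonempty (Fin m) := ⟨⟨0, hm⟩⟩
  set S := ∑ i ∈ range τ, sqNorm (x ((k : ℤ) - τ + 1 + i) - x ((k : ℤ) - τ + i))
  have hκ_succ : ∀ j, κ' j =
      κk - M / (2 * √m) * S + M / (2 * √m) * τ * ‖w j - x k j‖ ^ 2 := by
    intro j
    rw [hκ' j, hκk, weighted_window_sqNorm_succ x (y j) k τ fun h hh => by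
      rw [hy, if_neg (by omega)], hy, if_pos rfl, hX, sqNorm_update_sub_self]
    ring
  have hcross := sum_inner_le_of_delay (v := w - x k) hm hM.le (sqNorm_nonneg _)
    (sum_nonneg fun _ _ => sqNorm_nonneg _) hMd (sqNorm_sub_le_of_delay x k hd hxd)
  have key := average_le_of_blockwise
    (fun j => hX j ▸ apply_update_le_of_lipschitz_pgrad (hf.differentiable one_ne_zero) (hLip j) _)
    hprox_self hκ_succ
    (by simpa only [inner_sub_left, Pi.sub_apply, Fintype.card_fin] using hcross)
  have hr_upd : ∀ j, ∑ j', r j' (X j j') = ((∑ i, ρ i - ρ j + ρw j : ℝ) : EReal) := fun j =>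
    hX j ▸ sum_apply_update_eq_coe r hρ (hρw j)
  rw [Fintype.card_fin, show 4 * (M / (2 * √m)) * τ = 2 * M * τ / √m by ring] at key
  simp only [hr_upd, hρ]
  exact_mod_cast key

theorem stmt_8 {m : ℕ} (hm : 1 ≤ m)
    (H : Fin m → Type*) [∀ j, NormedAddCommGroup (H j)]
    [∀ j, InnerProductSpace ℝ (H j)] [∀ j, FiniteDimensional ℝ (H j)]
    (f : (∀ j, H j) → ℝ) (hf : ContDiff ℝ 1 f)
    (r : ∀ j, H j → EReal)
    (hr_ne_top : ∀ j, ∃ y, r j y ≠ ⊤) (hr_ne_bot : ∀ j y, r j y ≠ ⊥)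
    (hr_lsc : ∀ j, LowerSemicontinuous (r j))
    (τ : ℕ) (hτ : 1 ≤ τ) (M : ℝ) (hM : 0 < M) (k : ℕ)
    -- the trajectory x^0, …, x^k, extended by x^h = x^0 for h ≤ 0
    (x : ℤ → ∀ j, H j) (hx0 : ∀ h : ℤ, h ≤ 0 → x h = x 0)
    -- delay vector and delayed iterate x^{k-d_k}
    (d : Fin m → ℕ) (hd : ∀ j, d j ≤ τ)
    (xd : ∀ j, H j) (hxd : ∀ j, xd j = x ((k : ℤ) - d j) j)
    -- ‖∇f(x^k) − ∇f(x^{k−d_k})‖ ≤ M ‖x^k − x^{k−d_k}‖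
    (hMd : Real.sqrt (sqNorm (fun j => pgrad f (x k) j (x k j) - pgrad f xd j (xd j))) ≤
      M * Real.sqrt (sqNorm (x k - xd)))
    -- partial-gradient Lipschitz moduli L_j(x^k_{−j})
    (Lip : Fin m → ℝ)
    (hLip : ∀ (j : Fin m) (y y' : H j),
      ‖pgrad f (x k) j y - pgrad f (x k) j y'‖ ≤ Lip j * ‖y - y'‖)
    -- stepsizes and the prox-gradient updates w_j^k
    (γ : Fin m → ℝ) (hγ : ∀ j, 0 < γ j)
    (w : ∀ j, H j)
    (hprox : ∀ (j : Fin m) (y : H j),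
      r j (w j) +
          ((⟪pgrad f xd j (xd j), w j - x k j⟫ + (1 / (2 * γ j)) * ‖w j - x k j‖ ^ 2 : ℝ) : EReal) ≤
        r j y +
          ((⟪pgrad f xd j (xd j), y - x k j⟫ + (1 / (2 * γ j)) * ‖y - x k j‖ ^ 2 : ℝ) : EReal))
    -- x^{k+1,(j)} = x^k with block j replaced by w_j^k
    (X : Fin m → ∀ j', H j') (hX : ∀ j, X j = Function.update (x k) j (w j))
    -- the trajectory continued by x^{k+1} := x^{k+1,(j)}
    (y : Fin m → ℤ → ∀ j', H j')
    (hy : ∀ (j : Fin m) (h : ℤ), y j h = if h = (k : ℤ) + 1 then X j else x h)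
    -- κ_k and κ_{k+1}^{(j)}
    (κk : ℝ)
    (hκk : κk = (M / (2 * Real.sqrt m)) * ∑ i ∈ Finset.range τ,
      ((i : ℝ) + 1) * sqNorm (x ((k : ℤ) - τ + 1 + i) - x ((k : ℤ) - τ + i)))
    (κ' : Fin m → ℝ)
    (hκ' : ∀ j, κ' j = (M / (2 * Real.sqrt m)) * ∑ i ∈ Finset.range τ,
      ((i : ℝ) + 1) *
        sqNorm (y j ((k : ℤ) + 1 - τ + 1 + i) - y j ((k : ℤ) + 1 - τ + i))) :
    ((1 / (m : ℝ) : ℝ) : EReal) *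
        ∑ j, ((f (X j) : EReal) + ∑ j', r j' (X j j') + (κ' j : EReal)) ≤
      (f (x k) : EReal) + ∑ j', r j' (x k j') + (κk : EReal) -
        (((1 / (2 * (m : ℝ))) * ∑ j, (1 / γ j - Lip j - 2 * M * (τ : ℝ) / Real.sqrt m) *
            ‖w j - x k j‖ ^ 2 : ℝ) : EReal) :=
  stmt_8_general hm H f hf r hr_ne_bot τ M hM k x d hd xd hxd hMd Lip hLip γ w hprox X hX y hy κk
    hκk κ' hκ'
end
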